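/- Let C ⊆ V be a proper cone with base B = C ∩ {v | ⟨e,v⟩ = 1} for some e in the interior of C*. Let b₁, b₂ ∈ B and set m := inf_C(b₁/b₂) and M := sup_C(b₁/b₂); assume 0 < m < M < ∞. Then (1/2)‖b₁−b₂‖_B = N_B(b₁−b₂) ≤ (M−1)(1−m)/(M−m) ≤ 1/(1+m) − 1/(1+M) ≤ tanh(h_C(b₁,b₂)/4). -/

import Mathlib

noncomputable section

variable {V : Type*} [NormedAddCommGroup V] [InnerProductSpace ℝ V]

/-- A proper cone: closed, convex, closed under nonnegative scaling, pointed and solid. -/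
def IsProperCone (C : Set V) : Prop :=
  IsClosed C ∧ Convex ℝ C ∧ (∀ (r : ℝ), 0 ≤ r → ∀ x ∈ C, r • x ∈ C) ∧
    (C ∩ (-C) = {0}) ∧ (Submodule.span ℝ C = ⊤)

/-- `sup_C(a/b) := inf {λ : ℝ | λ • b - a ∈ C}`, as an extended real (`⊤` if no such `λ`). -/
def supRatio (C : Set V) (a b : V) : EReal :=
  sInf ((fun l : ℝ => (l : EReal)) '' {l : ℝ | l • b - a ∈ C})

/-- `inf_C(a/b) := sup {λ : ℝ | a - λ • b ∈ C}`. -/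
def infRatio (C : Set V) (a b : V) : EReal :=
  sSup ((fun l : ℝ => (l : EReal)) '' {l : ℝ | a - l • b ∈ C})

/-- Hilbert's projective metric `h_C(a,b) = ln (sup_C(a/b) * sup_C(b/a)) ∈ [0,∞]`. -/
def hilbertDist (C : Set V) (a b : V) : EReal :=
  if supRatio C a b = ⊤ ∨ supRatio C b a = ⊤ then ⊤
  else ((Real.log ((supRatio C a b).toReal * (supRatio C b a).toReal) : ℝ) : EReal)

/-- The oscillation `osc_C(a/b) = sup_C(a/b) - inf_C(a/b)`. -/
def oscRatio (C : Set V) (a b : V) : EReal :=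
  supRatio C a b - infRatio C a b

variable {V' : Type*} [NormedAddCommGroup V'] [InnerProductSpace ℝ V']

/-- The projective diameter `Δ(T)` of a cone-preserving linear map `T`. -/
def projDiam (C : Set V) (C' : Set V') (T : V →ₗ[ℝ] V') : EReal :=
  ⨆ (a : V) (_ : a ∈ C \ {0}) (b : V) (_ : b ∈ C \ {0}), hilbertDist C' (T a) (T b)

/-- `tanh(x/4)`, with the convention `tanh(⊤/4) = 1`. -/
def tanhQuarter (x : EReal) : ℝ :=
  if x = ⊤ then 1 else Real.tanh (x.toReal / 4)

/-- `tanh(x/2)`, with the convention `tanh(⊤/2) = 1`. -/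
def tanhHalf (x : EReal) : ℝ :=
  if x = ⊤ then 1 else Real.tanh (x.toReal / 2)

/-- The dual cone of `C` (identifying `V` with its dual via the inner product). -/
def dualConeSet (C : Set V) : Set V := {w : V | ∀ c ∈ C, 0 ≤ (inner ℝ w c : ℝ)}

/-- The base norm `‖v‖_B` induced by the cone `C` and the functional `⟨e, ·⟩`. -/
def baseNorm (C : Set V) (e : V) (v : V) : ℝ :=
  sInf {r : ℝ | ∃ cp ∈ C, ∃ cm ∈ C, v = cp - cm ∧ r = (inner ℝ e cp : ℝ) + (inner ℝ e cm : ℝ)}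

/-- The negativity `N_B(v)` induced by the cone `C` and the functional `⟨e, ·⟩`. -/
def negativity (C : Set V) (e : V) (v : V) : ℝ :=
  sInf {r : ℝ | ∃ cp ∈ C, ∃ cm ∈ C, v = cp - cm ∧ r = (inner ℝ e cm : ℝ)}

/-!
Both extremal vectors `b₁ - m • b₂` and `M • b₂ - b₁` lie in `C` (the ratios are attained because
`C` is closed), and `b₁ - b₂` is an explicit nonnegative combination of them; pairing its negative
part with `e` bounds the negativity. Since `⟨e, b₁ - b₂⟩ = 0`, both parts of any decomposition of
`b₁ - b₂` have the same weight, so the base norm is twice the negativity. Finally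
`sup_C(b₂/b₁) = 1/m`, so `h_C(b₁, b₂) = log (M/m)`, and the two remaining inequalities are the
elementary facts `(M m - 1)² ≥ 0` and `(s m - 1)² ≥ 0` for `s = √(M/m)`.
-/

theorem EReal.mem_of_coe_eq_sInf_image {S : Set ℝ} (hS : IsClosed S) {M : ℝ}
    (h : (M : EReal) = sInf ((fun l : ℝ => (l : EReal)) '' S)) : M ∈ S := by
  have hne : S.Nonempty := by
    rw [Set.nonempty_iff_ne_empty]
    rintro rfl
    simp at h
  exact (IsGLB.of_image EReal.coe_le_coe_iff (h ▸ isGLB_sInf _)).mem_of_isClosed hne hS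

theorem EReal.mem_of_coe_eq_sSup_image {S : Set ℝ} (hS : IsClosed S) {m : ℝ}
    (h : (m : EReal) = sSup ((fun l : ℝ => (l : EReal)) '' S)) : m ∈ S := by
  have hne : S.Nonempty := by
    rw [Set.nonempty_iff_ne_empty]
    rintro rfl
    simp at h
  exact (IsLUB.of_image EReal.coe_le_coe_iff (h ▸ isLUB_sSup _)).mem_of_isClosed hne hS

theorem Real.tanh_log_div_two {t : ℝ} (ht : 0 < t) : tanh (log t / 2) = (t - 1) / (t + 1) := by
  rw [tanh_eq, exp_neg]
  have hsq : exp (log t / 2) ^ 2 = t := by rw [sq, ← exp_add, add_halves, exp_log ht]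
  have hs := exp_pos (log t / 2)
  generalize exp (log t / 2) = s at hsq hs ⊢
  subst hsq
  field_simp

theorem sub_one_mul_one_sub_div_le {m M : ℝ} (hm : -1 < m) (hmM : m < M) :
    (M - 1) * (1 - m) / (M - m) ≤ 1 / (1 + m) - 1 / (1 + M) := by
  rw [div_sub_div _ _ (by linarith) (by linarith), div_le_div_iff₀ (by linarith) (by nlinarith)]
  nlinarith [sq_nonneg (M * m - 1)]

theorem one_div_one_add_sub_le_sub_div_add {m s : ℝ} (hm : 0 < m) (hs : 1 ≤ s) :
    1 / (1 + m) - 1 / (1 + s ^ 2 * m) ≤ (s - 1) / (s + 1) := by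
  rw [div_sub_div _ _ (by positivity) (by positivity), div_le_div_iff₀ (by positivity) (by linarith)]
  -- after clearing denominators this is `(s - 1) * (s * m - 1) ^ 2 ≥ 0`
  nlinarith [mul_nonneg (sub_nonneg.mpr hs) (sq_nonneg (s * m - 1))]

theorem one_div_one_add_sub_le_tanh_log_div_four {m M : ℝ} (hm : 0 < m) (hmM : m ≤ M) :
    1 / (1 + m) - 1 / (1 + M) ≤ Real.tanh (Real.log (M / m) / 4) := by
  set s := √(M / m)
  have hs : 1 ≤ s := Real.one_le_sqrt.2 ((one_le_div hm).2 hmM)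
  have hM : M = s ^ 2 * m := by
    rw [Real.sq_sqrt (div_nonneg (hm.le.trans hmM) hm.le)]
    field_simp
  have hlog : Real.log (M / m) / 4 = Real.log s / 2 := by
    rw [Real.log_sqrt (div_nonneg (hm.le.trans hmM) hm.le)]
    ring
  rw [hlog, Real.tanh_log_div_two (by linarith), hM]
  exact one_div_one_add_sub_le_sub_div_add hm hs

namespace IsProperCone

variable {C : Set V}

theorem smul_mem (hC : IsProperCone C) {r : ℝ} (hr : 0 ≤ r) {x : V} (hx : x ∈ C) : r • x ∈ C :=
  hC.2.2.1 r hr x hx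

theorem add_mem (hC : IsProperCone C) {x y : V} (hx : x ∈ C) (hy : y ∈ C) : x + y ∈ C := by
  have hmid := hC.2.1 hx hy (by norm_num : (0 : ℝ) ≤ 1 / 2) (by norm_num : (0 : ℝ) ≤ 1 / 2)
    (by norm_num)
  convert hC.smul_mem zero_le_two hmid using 1
  rw [smul_add, smul_smul, smul_smul]
  norm_num

theorem eq_zero_of_mem_of_neg_mem (hC : IsProperCone C) {x : V} (hx : x ∈ C) (hnx : -x ∈ C) :
    x = 0 := by
  have hx' : x ∈ C ∩ -C := ⟨hx, by simpa using hnx⟩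
  rwa [hC.2.2.2.1] at hx'

end IsProperCone

section Ratios

variable {C : Set V} {a b : V}

theorem smul_sub_mem_of_coe_eq_supRatio (hC : IsClosed C) {M : ℝ}
    (hM : (M : EReal) = supRatio C a b) : M • b - a ∈ C :=
  EReal.mem_of_coe_eq_sInf_image (hC.preimage (by fun_prop)) hM

theorem sub_smul_mem_of_coe_eq_infRatio (hC : IsClosed C) {m : ℝ}
    (hm : (m : EReal) = infRatio C a b) : a - m • b ∈ C :=
  EReal.mem_of_coe_eq_sSup_image (hC.preimage (by fun_prop)) hm

theorem supRatio_eq_inv_of_coe_eq_infRatio (hC : IsProperCone C) (ha : a ∈ C) (hb : b ∈ C)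
    (hb0 : b ≠ 0) {m : ℝ} (hm : (m : EReal) = infRatio C a b) (hm0 : 0 < m) :
    supRatio C b a = (m⁻¹ : ℝ) := by
  have hpos : ∀ l : ℝ, l • a - b ∈ C → 0 < l := by
    intro l hl
    by_contra! hl0
    refine hb0 (hC.eq_zero_of_mem_of_neg_mem hb ?_)
    convert hC.add_mem (hC.smul_mem (neg_nonneg.2 hl0) ha) hl using 1
    rw [neg_smul]
    abel
  have hlow := sub_smul_mem_of_coe_eq_infRatio hC.1 hm
  apply le_antisymm
  · refine sInf_le ⟨m⁻¹, show m⁻¹ • a - b ∈ C from ?_, rfl⟩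
    convert hC.smul_mem (inv_nonneg.2 hm0.le) hlow using 1
    rw [smul_sub, smul_smul, inv_mul_cancel₀ hm0.ne', one_smul]
  · refine le_sInf ?_
    rintro _ ⟨l, hl, rfl⟩
    have hl0 := hpos l hl
    have hmem : a - l⁻¹ • b ∈ C := by
      convert hC.smul_mem (inv_nonneg.2 hl0.le) hl using 1
      rw [smul_sub, smul_smul, inv_mul_cancel₀ hl0.ne', one_smul]
    have hle : ((l⁻¹ : ℝ) : EReal) ≤ m := hm ▸ le_sSup ⟨l⁻¹, hmem, rfl⟩
    exact EReal.coe_le_coe_iff.2 (inv_le_of_inv_le₀ hl0 (EReal.coe_le_coe_iff.1 hle))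

theorem hilbertDist_eq_log {M M' : ℝ} (hab : supRatio C a b = M) (hba : supRatio C b a = M') :
    hilbertDist C a b = (Real.log (M * M') : ℝ) := by
  simp [hilbertDist, hab, hba]

end Ratios

theorem tanhQuarter_coe (x : ℝ) : tanhQuarter x = Real.tanh (x / 4) := by
  simp [tanhQuarter]

section BaseNorm

open scoped Pointwise

variable {C : Set V} {e : V}

theorem baseNorm_eq_two_mul_negativity {v : V} (hv : inner ℝ e v = (0 : ℝ)) :
    baseNorm C e v = 2 * negativity C e v := by
  have hbal : ∀ cp cm : V, v = cp - cm → (inner ℝ e cp : ℝ) = inner ℝ e cm := by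
    rintro cp cm rfl
    rwa [inner_sub_right, sub_eq_zero] at hv
  have hset : {r : ℝ | ∃ cp ∈ C, ∃ cm ∈ C, v = cp - cm ∧ r = inner ℝ e cp + inner ℝ e cm} =
      (2 : ℝ) • {r : ℝ | ∃ cp ∈ C, ∃ cm ∈ C, v = cp - cm ∧ r = inner ℝ e cm} := by
    ext r
    rw [Set.mem_smul_set]
    constructor
    · rintro ⟨cp, hcp, cm, hcm, hdec, rfl⟩
      refine ⟨_, ⟨cp, hcp, cm, hcm, hdec, rfl⟩, ?_⟩
      rw [smul_eq_mul, hbal cp cm hdec]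
      ring
    · rintro ⟨_, ⟨cp, hcp, cm, hcm, hdec, rfl⟩, rfl⟩
      refine ⟨cp, hcp, cm, hcm, hdec, ?_⟩
      rw [smul_eq_mul, hbal cp cm hdec]
      ring
  rw [baseNorm, negativity, hset, Real.sInf_smul_of_nonneg zero_le_two, smul_eq_mul]

theorem negativity_le_of_eq_sub (he : ∀ c ∈ C, 0 ≤ (inner ℝ e c : ℝ)) {v cp cm : V}
    (hcp : cp ∈ C) (hcm : cm ∈ C) (hv : v = cp - cm) : negativity C e v ≤ inner ℝ e cm :=
  csInf_le ⟨0, by rintro _ ⟨_, -, cm', hcm', -, rfl⟩; exact he _ hcm'⟩ ⟨cp, hcp, cm, hcm, hv, rfl⟩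

theorem negativity_sub_le (hC : IsProperCone C) (he : ∀ c ∈ C, 0 ≤ (inner ℝ e c : ℝ))
    {a b : V} (ha : inner ℝ e a = (1 : ℝ)) (hb : inner ℝ e b = (1 : ℝ)) {m M : ℝ}
    (hlow : a - m • b ∈ C) (hup : M • b - a ∈ C) (hmM : m < M) :
    negativity C e (a - b) ≤ (M - 1) * (1 - m) / (M - m) := by
  have hlow_e : (inner ℝ e (a - m • b) : ℝ) = 1 - m := by
    rw [inner_sub_right, real_inner_smul_right, ha, hb, mul_one]
  have hup_e : (inner ℝ e (M • b - a) : ℝ) = M - 1 := by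
    rw [inner_sub_right, real_inner_smul_right, ha, hb, mul_one]
  have hm1 : m ≤ 1 := by linarith [hlow_e ▸ he _ hlow]
  have hM1 : 1 ≤ M := by linarith [hup_e ▸ he _ hup]
  have hMm : 0 < M - m := by linarith
  have hdec : a - b =
      ((M - 1) / (M - m)) • (a - m • b) - ((1 - m) / (M - m)) • (M • b - a) := by
    match_scalars <;> field_simp <;> ring
  calc negativity C e (a - b)
      ≤ inner ℝ e (((1 - m) / (M - m)) • (M • b - a)) :=
        negativity_le_of_eq_sub he (hC.smul_mem (by positivity) hlow)
          (hC.smul_mem (div_nonneg (by linarith) hMm.le) hup) hdec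
    _ = (M - 1) * (1 - m) / (M - m) := by
        rw [real_inner_smul_right, hup_e]
        ring

end BaseNorm

theorem baseNorm_vs_supinf_bounds_general
    {V : Type*} [NormedAddCommGroup V] [InnerProductSpace ℝ V]
    (C : Set V) (hC : IsProperCone C)
    (e : V) (he : e ∈ interior (dualConeSet C))
    (B : Set V) (hB : B = C ∩ {v : V | (inner ℝ e v : ℝ) = 1})
    (b₁ : V) (hb₁ : b₁ ∈ B) (b₂ : V) (hb₂ : b₂ ∈ B)
    (m M : ℝ) (hm : (m : EReal) = infRatio C b₁ b₂) (hM : (M : EReal) = supRatio C b₁ b₂)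
    (hm0 : 0 < m) (hmM : m < M) :
    (1 / 2) * baseNorm C e (b₁ - b₂) = negativity C e (b₁ - b₂) ∧
    negativity C e (b₁ - b₂) ≤ (M - 1) * (1 - m) / (M - m) ∧
    (M - 1) * (1 - m) / (M - m) ≤ 1 / (1 + m) - 1 / (1 + M) ∧
    1 / (1 + m) - 1 / (1 + M) ≤ tanhQuarter (hilbertDist C b₁ b₂) := by
  rw [hB] at hb₁ hb₂
  obtain ⟨hb₁C, hb₁e⟩ := hb₁
  obtain ⟨hb₂C, hb₂e⟩ := hb₂
  have he' : ∀ c ∈ C, 0 ≤ (inner ℝ e c : ℝ) := interior_subset he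
  have hdiff : inner ℝ e (b₁ - b₂) = (0 : ℝ) := by rw [inner_sub_right, hb₁e, hb₂e, sub_self]
  have hb₂0 : b₂ ≠ 0 := by
    rintro rfl
    simp at hb₂e
  have hsup_rev := supRatio_eq_inv_of_coe_eq_infRatio hC hb₁C hb₂C hb₂0 hm hm0
  refine ⟨by rw [baseNorm_eq_two_mul_negativity hdiff]; ring,
    negativity_sub_le hC he' hb₁e hb₂e (sub_smul_mem_of_coe_eq_infRatio hC.1 hm)
      (smul_sub_mem_of_coe_eq_supRatio hC.1 hM) hmM,
    sub_one_mul_one_sub_div_le (by linarith) hmM, ?_⟩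
  rw [hilbertDist_eq_log hM.symm hsup_rev, ← div_eq_mul_inv, tanhQuarter_coe]
  exact one_div_one_add_sub_le_tanh_log_div_four hm0 hmM.le

/-- Stronger bounds for the base norm in terms of `sup_C` and `inf_C`. -/
theorem baseNorm_vs_supinf_bounds
    {V : Type*} [NormedAddCommGroup V] [InnerProductSpace ℝ V] [FiniteDimensional ℝ V]
    (C : Set V) (hC : IsProperCone C)
    (e : V) (he : e ∈ interior (dualConeSet C))
    (B : Set V) (hB : B = C ∩ {v : V | (inner ℝ e v : ℝ) = 1})
    (b₁ : V) (hb₁ : b₁ ∈ B) (b₂ : V) (hb₂ : b₂ ∈ B)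
    (m M : ℝ) (hm : (m : EReal) = infRatio C b₁ b₂) (hM : (M : EReal) = supRatio C b₁ b₂)
    (hm0 : 0 < m) (hmM : m < M) :
    (1 / 2) * baseNorm C e (b₁ - b₂) = negativity C e (b₁ - b₂) ∧
    negativity C e (b₁ - b₂) ≤ (M - 1) * (1 - m) / (M - m) ∧
    (M - 1) * (1 - m) / (M - m) ≤ 1 / (1 + m) - 1 / (1 + M) ∧
    1 / (1 + m) - 1 / (1 + M) ≤ tanhQuarter (hilbertDist C b₁ b₂) :=
  baseNorm_vs_supinf_bounds_general C hC e he B hB b₁ hb₁ b₂ hb₂ m M hm hM hm0 hmM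

end
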